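/- Completeness of S5BKE with respect to frame-based semantics: for every set of formulas Φ and every formula φ, if Φ ⊨_f φ (every frame-based model satisfying all of Φ satisfies φ), then Φ ⊢ φ in the calculus S5BKE. -/
import Mathlib


/-- Formulas of S5BKE over variables `x_n`, with primitive `¬`, `→`, `□`, `K`, `B`. -/
inductive Fm : Type
  | var : ℕ → Fm
  | neg : Fm → Fm
  | imp : Fm → Fm → Fm
  | box : Fm → Fm
  | K : Fm → Fm
  | B : Fm → Fm
  deriving DecidableEq

/-- `⊤` defined as usual. -/
def fmTop : Fm := Fm.imp (Fm.var 0) (Fm.var 0)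
/-- `⊥` defined as usual. -/
def fmBot : Fm := Fm.neg fmTop
/-- Conjunction, defined from `¬, →`. -/
def fmAnd (φ ψ : Fm) : Fm := Fm.neg (Fm.imp φ (Fm.neg ψ))
/-- Biconditional, defined as usual. -/
def fmIff (φ ψ : Fm) : Fm := fmAnd (Fm.imp φ ψ) (Fm.imp ψ φ)
/-- Propositional identity `φ ≡ ψ := □(φ ↔ ψ)`. -/
def fmEquiv (φ ψ : Fm) : Fm := Fm.box (fmIff φ ψ)

/-- Boolean evaluation treating variables and modal formulas as atoms. -/
def evalB (v : Fm → Bool) : Fm → Bool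
  | Fm.neg φ => !evalB v φ
  | Fm.imp φ ψ => !evalB v φ || evalB v ψ
  | φ => v φ

/-- `φ` has the form of a classical tautology. -/
def IsTaut (φ : Fm) : Prop := ∀ v : Fm → Bool, evalB v φ = true

/-- The axioms of S5BKE. -/
inductive Ax : Fm → Prop
  | taut {φ} : IsTaut φ → Ax φ
  | kRefl (φ) : Ax (Fm.imp (Fm.K φ) φ)
  | kB (φ) : Ax (Fm.imp (Fm.K φ) (Fm.B φ))
  | box4 (φ) : Ax (Fm.imp (Fm.box φ) (Fm.box (Fm.box φ)))
  | box5 (φ) : Ax (Fm.imp (Fm.neg (Fm.box φ)) (Fm.box (Fm.neg (Fm.box φ))))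
  | boxK (φ) : Ax (Fm.imp (Fm.box φ) (Fm.K φ))
  | kDist (φ ψ) : Ax (Fm.imp (Fm.K (Fm.imp φ ψ)) (Fm.imp (Fm.K φ) (Fm.K ψ)))
  | bDist (φ ψ) : Ax (Fm.imp (Fm.B (Fm.imp φ ψ)) (Fm.imp (Fm.B φ) (Fm.B ψ)))
  | boxDist (φ ψ) : Ax (Fm.imp (Fm.box (Fm.imp φ ψ)) (Fm.imp (Fm.box φ) (Fm.box ψ)))
  | consB : Ax (Fm.neg (Fm.B fmBot))

/-- Derivability in S5BKE: hypotheses, axioms, modus ponens, axiom necessitation. -/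
inductive Deriv (Φ : Set Fm) : Fm → Prop
  | hyp {φ} : φ ∈ Φ → Deriv Φ φ
  | ax {φ} : Ax φ → Deriv Φ φ
  | mp {φ ψ} : Deriv Φ (Fm.imp φ ψ) → Deriv Φ φ → Deriv Φ ψ
  | nec {φ} : Ax φ → Deriv Φ (Fm.box φ)

def Consistent (Φ : Set Fm) : Prop := ¬ Deriv Φ fmBot

def MaxConsistent (Γ : Set Fm) : Prop :=
  Consistent Γ ∧ ∀ Δ : Set Fm, Γ ⊂ Δ → ¬ Consistent Δ
/-- A frame `(W, P, E_K, E_B, w_T)` for S5BKE. -/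
structure Frame where
  W : Type
  wT : W
  P : Set (Set W)
  EK : W → Set (Set W)
  EB : W → Set (Set W)
  empty_mem : (∅ : Set W) ∈ P
  univ_mem : (Set.univ : Set W) ∈ P
  inter_mem : ∀ A B : Set W, A ∈ P → B ∈ P → A ∩ B ∈ P
  union_mem : ∀ A B : Set W, A ∈ P → B ∈ P → A ∪ B ∈ P
  compl_mem : ∀ A : Set W, A ∈ P → Aᶜ ∈ P
  kprop_mem : ∀ A : Set W, A ∈ P → {w : W | A ∈ EK w} ∈ P
  bprop_mem : ∀ A : Set W, A ∈ P → {w : W | A ∈ EB w} ∈ P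
  EK_sub : ∀ w : W, EK w ⊆ P
  EB_sub : ∀ w : W, EB w ⊆ P
  EK_nonempty : ∀ w : W, (EK w).Nonempty
  EK_inter : ∀ (w : W) (A B : Set W), A ∈ EK w → B ∈ EK w → A ∩ B ∈ EK w
  EK_up : ∀ (w : W) (A B : Set W), A ∈ EK w → A ⊆ B → B ∈ P → B ∈ EK w
  EK_fact : ∀ (w : W) (A : Set W), A ∈ EK w → w ∈ A
  EB_nonempty : ∀ w : W, (EB w).Nonempty
  EB_inter : ∀ (w : W) (A B : Set W), A ∈ EB w → B ∈ EB w → A ∩ B ∈ EB w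
  EB_up : ∀ (w : W) (A B : Set W), A ∈ EB w → A ⊆ B → B ∈ P → B ∈ EB w
  EB_proper : ∀ w : W, (∅ : Set W) ∉ EB w
  EK_sub_EB : ∀ w : W, EK w ⊆ EB w

/-- Satisfaction at worlds of a frame, relative to an assignment `g`. -/
def FSat (F : Frame) (g : ℕ → Set F.W) : Fm → F.W → Prop
  | Fm.var n => fun w => w ∈ g n
  | Fm.neg φ => fun w => ¬ FSat F g φ w
  | Fm.imp φ ψ => fun w => FSat F g φ w → FSat F g ψ w
  | Fm.box φ => fun _ => ∀ w' : F.W, FSat F g φ w'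
  | Fm.K φ => fun w => {w' : F.W | FSat F g φ w'} ∈ F.EK w
  | Fm.B φ => fun w => {w' : F.W | FSat F g φ w'} ∈ F.EB w

/-- A frame-based model `K = (F, g)`. -/
structure FModel where
  F : Frame
  g : ℕ → Set F.W
  g_mem : ∀ n : ℕ, g n ∈ F.P

/-- `K ⊨ φ` iff `w_T ⊨ φ`. -/
def FMSat (𝕂 : FModel) (φ : Fm) : Prop := FSat 𝕂.F 𝕂.g φ 𝕂.F.wT

/-- Frame-based logical consequence. -/
def FEntails (Φ : Set Fm) (φ : Fm) : Prop :=
  ∀ 𝕂 : FModel, (∀ ψ ∈ Φ, FMSat 𝕂 ψ) → FMSat 𝕂 φ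

section Aux
open Fm

lemma evalB_neg (v : Fm → Bool) (φ : Fm) : evalB v (Fm.neg φ) = !evalB v φ := rfl
lemma evalB_imp (v : Fm → Bool) (φ ψ : Fm) :
    evalB v (Fm.imp φ ψ) = (!evalB v φ || evalB v ψ) := rfl
lemma evalB_var (v : Fm → Bool) (n : ℕ) : evalB v (Fm.var n) = v (Fm.var n) := rfl

lemma dtaut {Φ : Set Fm} {φ : Fm} (h : IsTaut φ) : Deriv Φ φ := Deriv.ax (Ax.taut h)

lemma d_id {Φ : Set Fm} (φ : Fm) : Deriv Φ (imp φ φ) := by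
  apply dtaut; intro v; simp only [evalB_imp]; cases evalB v φ <;> rfl

lemma d_K {Φ : Set Fm} (φ ψ : Fm) : Deriv Φ (imp φ (imp ψ φ)) := by
  apply dtaut; intro v; simp only [evalB_imp]
  cases evalB v φ <;> cases evalB v ψ <;> rfl

lemma d_S {Φ : Set Fm} (φ ψ χ : Fm) :
    Deriv Φ (imp (imp φ (imp ψ χ)) (imp (imp φ ψ) (imp φ χ))) := by
  apply dtaut; intro v; simp only [evalB_imp]
  cases evalB v φ <;> cases evalB v ψ <;> cases evalB v χ <;> rfl

lemma d_absurd {Φ : Set Fm} (φ ψ : Fm) : Deriv Φ (imp φ (imp (neg φ) ψ)) := by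
  apply dtaut; intro v; simp only [evalB_imp, evalB_neg]
  cases evalB v φ <;> cases evalB v ψ <;> rfl

lemma d_negimp {Φ : Set Fm} (φ ψ : Fm) : Deriv Φ (imp (neg φ) (imp φ ψ)) := by
  apply dtaut; intro v; simp only [evalB_imp, evalB_neg]
  cases evalB v φ <;> cases evalB v ψ <;> rfl

lemma d_dne {Φ : Set Fm} (φ : Fm) : Deriv Φ (imp (imp (neg φ) fmBot) φ) := by
  apply dtaut; intro v
  simp only [fmBot, fmTop, evalB_imp, evalB_neg, evalB_var]
  cases evalB v φ <;> cases v (Fm.var 0) <;> rfl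

lemma d_cases {Φ : Set Fm} (φ : Fm) :
    Deriv Φ (imp (imp φ fmBot) (imp (imp (neg φ) fmBot) fmBot)) := by
  apply dtaut; intro v
  simp only [fmBot, fmTop, evalB_imp, evalB_neg, evalB_var]
  cases evalB v φ <;> cases v (Fm.var 0) <;> rfl

lemma d_andI {Φ : Set Fm} (φ ψ : Fm) : Deriv Φ (imp φ (imp ψ (fmAnd φ ψ))) := by
  apply dtaut; intro v
  simp only [fmAnd, evalB_imp, evalB_neg]
  cases evalB v φ <;> cases evalB v ψ <;> rfl

/-- Deduction theorem. -/
theorem deduction {Φ : Set Fm} {ψ φ : Fm} (h : Deriv (insert ψ Φ) φ) :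
    Deriv Φ (imp ψ φ) := by
  induction h with
  | hyp hm =>
    rcases hm with rfl | hm
    · exact d_id _
    · exact Deriv.mp (d_K _ _) (Deriv.hyp hm)
  | ax ha => exact Deriv.mp (d_K _ _) (Deriv.ax ha)
  | mp h1 h2 ih1 ih2 => exact Deriv.mp (Deriv.mp (d_S _ _ _) ih1) ih2
  | nec ha => exact Deriv.mp (d_K _ _) (Deriv.nec ha)

theorem Deriv.mono {Φ Ψ : Set Fm} {φ : Fm} (h : Deriv Φ φ) (hs : Φ ⊆ Ψ) :
    Deriv Ψ φ := by
  induction h with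
  | hyp hm => exact Deriv.hyp (hs hm)
  | ax ha => exact Deriv.ax ha
  | mp _ _ ih1 ih2 => exact Deriv.mp ih1 ih2
  | nec ha => exact Deriv.nec ha

theorem deriv_finite {Φ : Set Fm} {φ : Fm} (h : Deriv Φ φ) :
    ∃ Φ₀ : Finset Fm, ↑Φ₀ ⊆ Φ ∧ Deriv ↑Φ₀ φ := by
  induction h with
  | hyp hm => exact ⟨{_}, by simpa using hm, Deriv.hyp (by simp)⟩
  | ax ha => exact ⟨∅, by simp, Deriv.ax ha⟩
  | nec ha => exact ⟨∅, by simp, Deriv.nec ha⟩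
  | mp _ _ ih1 ih2 =>
    obtain ⟨A, hA, dA⟩ := ih1
    obtain ⟨B, hB, dB⟩ := ih2
    refine ⟨A ∪ B, ?_, Deriv.mp (dA.mono ?_) (dB.mono ?_)⟩ <;>
      simp [Set.union_subset_iff, hA, hB, Set.subset_union_left, Set.subset_union_right]

end Aux
section Lind
open Fm

/-- Complete consistent sets. -/
def CC (Γ : Set Fm) : Prop := Consistent Γ ∧ ∀ ψ : Fm, ψ ∈ Γ ∨ Fm.neg ψ ∈ Γ

lemma bot_of_pair {Γ : Set Fm} {ψ : Fm} (h1 : ψ ∈ Γ) (h2 : Fm.neg ψ ∈ Γ) :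
    Deriv Γ fmBot :=
  Deriv.mp (Deriv.mp (d_absurd ψ fmBot) (Deriv.hyp h1)) (Deriv.hyp h2)

lemma CC.not_both {Γ : Set Fm} (h : CC Γ) {ψ : Fm} (h1 : ψ ∈ Γ)
    (h2 : Fm.neg ψ ∈ Γ) : False := h.1 (bot_of_pair h1 h2)

lemma CC.closed {Γ : Set Fm} (h : CC Γ) {ψ : Fm} (hd : Deriv Γ ψ) : ψ ∈ Γ := by
  rcases h.2 ψ with hm | hm
  · exact hm
  · exact absurd (Deriv.mp (Deriv.mp (d_absurd ψ fmBot) hd) (Deriv.hyp hm)) h.1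

lemma CC.neg_iff {Γ : Set Fm} (h : CC Γ) {ψ : Fm} : Fm.neg ψ ∈ Γ ↔ ψ ∉ Γ := by
  constructor
  · intro h2 h1; exact h.not_both h1 h2
  · intro h1; rcases h.2 ψ with hm | hm
    · exact absurd hm h1
    · exact hm

lemma CC.imp_iff {Γ : Set Fm} (h : CC Γ) {φ ψ : Fm} :
    Fm.imp φ ψ ∈ Γ ↔ (φ ∈ Γ → ψ ∈ Γ) := by
  constructor
  · intro hi hφ; exact h.closed (Deriv.mp (Deriv.hyp hi) (Deriv.hyp hφ))
  · intro hi
    by_cases hφ : φ ∈ Γ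
    · exact h.closed (Deriv.mp (d_K ψ φ) (Deriv.hyp (hi hφ)))
    · exact h.closed (Deriv.mp (d_negimp φ ψ) (Deriv.hyp (h.neg_iff.2 hφ)))

/-- Lindenbaum's lemma via Zorn. -/
theorem lindenbaum {Φ : Set Fm} (h : Consistent Φ) : ∃ Γ : Set Fm, Φ ⊆ Γ ∧ CC Γ := by
  obtain ⟨Γ, hΦΓ, ⟨hΓc, _⟩, hmax⟩ :=
    zorn_subset_nonempty {S : Set Fm | Consistent S ∧ Φ ⊆ S}
      (fun c hc hchain ⟨S₀, hS₀⟩ => by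
        refine ⟨⋃₀ c, ⟨?_, (hc hS₀).2.trans (Set.subset_sUnion_of_mem hS₀)⟩,
          fun S hS => Set.subset_sUnion_of_mem hS⟩
        intro hbot
        obtain ⟨Φ₀, hΦ₀, hd⟩ := deriv_finite hbot
        have hdir : DirectedOn (· ⊆ ·) c := hchain.directedOn
        -- find a member of c containing Φ₀
        have : ∃ S ∈ c, ↑Φ₀ ⊆ S := by
          classical
          refine Finset.induction_on Φ₀ (fun _ => ⟨S₀, hS₀, by simp⟩) ?_ hΦ₀
          · intro a s _ ih hsub
            obtain ⟨S₁, hS₁, hs₁⟩ := ih (by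
              intro x hx; exact hsub (by simp [hx]))
            obtain ⟨S₂, hS₂, hx₂⟩ : ∃ S ∈ c, a ∈ S := by
              have := hsub (by simp : a ∈ (insert a s : Finset Fm))
              simpa [Set.mem_sUnion] using this
            obtain ⟨S₃, hS₃, h13, h23⟩ := hdir S₁ hS₁ S₂ hS₂
            exact ⟨S₃, hS₃, by
              intro x hx
              rcases Finset.mem_insert.1 hx with rfl | hx
              · exact h23 hx₂
              · exact h13 (hs₁ hx)⟩
        obtain ⟨S, hSc, hsub⟩ := this
        exact (hc hSc).1 (hd.mono hsub))
      Φ ⟨h, subset_rfl⟩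
  refine ⟨Γ, hΦΓ, hΓc, fun ψ => ?_⟩
  by_contra hcon
  push_neg at hcon
  obtain ⟨h1, h2⟩ := hcon
  have key : ∀ χ : Fm, χ ∉ Γ → Deriv Γ (Fm.imp χ fmBot) := by
    intro χ hχ
    have : ¬ Consistent (insert χ Γ) := by
      intro hcons
      have := hmax ⟨hcons, hΦΓ.trans (Set.subset_insert _ _)⟩
        (Set.subset_insert _ _)
      exact hχ (this (Set.mem_insert χ Γ))
    exact deduction (not_not.1 fun hnd => this hnd)
  exact hΓc (Deriv.mp (Deriv.mp (d_cases ψ) (key ψ h1)) (key (Fm.neg ψ) h2))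

/-- If every hypothesis is boxed in a CC set `Δ`, then derivability from the
hypotheses gives the boxed conclusion in `Δ`. -/
theorem box_closed {S Δ : Set Fm} (hΔ : CC Δ) (hS : ∀ χ ∈ S, Fm.box χ ∈ Δ)
    {φ : Fm} (h : Deriv S φ) : Fm.box φ ∈ Δ := by
  induction h with
  | hyp hm => exact hS _ hm
  | ax ha => exact hΔ.closed (Deriv.nec ha)
  | nec ha => exact hΔ.closed (Deriv.mp (Deriv.ax (Ax.box4 _)) (Deriv.nec ha))
  | mp _ _ ih1 ih2 =>
    exact hΔ.closed (Deriv.mp (Deriv.mp (Deriv.ax (Ax.boxDist _ _)) (Deriv.hyp ih1))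
      (Deriv.hyp ih2))

end Lind
section Canon
open Fm

variable (Γ₀ : Set Fm)

/-- Worlds of the canonical frame: CC sets agreeing with `Γ₀` on boxed formulas. -/
def CW : Type :=
  {Δ : Set Fm // CC Δ ∧ ∀ ψ : Fm, (Fm.box ψ ∈ Γ₀ ↔ Fm.box ψ ∈ Δ)}

/-- Proof set of a formula. -/
def pset (ψ : Fm) : Set (CW Γ₀) := {Δ | ψ ∈ Δ.1}

variable {Γ₀}

theorem box_mem_iff (hΓ₀ : CC Γ₀) (Δ : CW Γ₀) (ψ : Fm) :
    Fm.box ψ ∈ Δ.1 ↔ ∀ Δ' : CW Γ₀, ψ ∈ Δ'.1 := by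
  constructor
  · intro hb Δ'
    have hb' : Fm.box ψ ∈ Δ'.1 := (Δ'.2.2 ψ).1 ((Δ.2.2 ψ).2 hb)
    have hk : Fm.K ψ ∈ Δ'.1 :=
      Δ'.2.1.closed (Deriv.mp (Deriv.ax (Ax.boxK ψ)) (Deriv.hyp hb'))
    exact Δ'.2.1.closed (Deriv.mp (Deriv.ax (Ax.kRefl ψ)) (Deriv.hyp hk))
  · intro hall
    by_contra hb
    have hbΓ : Fm.box ψ ∉ Γ₀ := fun hh => hb ((Δ.2.2 ψ).1 hh)
    set S : Set Fm := {χ | Fm.box χ ∈ Γ₀} with hSdef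
    have hcons : Consistent (insert (Fm.neg ψ) S) := by
      intro hbot
      have h1 : Deriv S (Fm.imp (Fm.neg ψ) fmBot) := deduction hbot
      have h2 : Deriv S ψ := Deriv.mp (d_dne ψ) h1
      exact hbΓ (box_closed hΓ₀ (fun χ hχ => hχ) h2)
    obtain ⟨Γ', hsub, hΓ'⟩ := lindenbaum hcons
    have hagree : ∀ χ : Fm, (Fm.box χ ∈ Γ₀ ↔ Fm.box χ ∈ Γ') := by
      intro χ
      constructor
      · intro hh
        have : Fm.box (Fm.box χ) ∈ Γ₀ :=
          hΓ₀.closed (Deriv.mp (Deriv.ax (Ax.box4 χ)) (Deriv.hyp hh))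
        exact hsub (Set.mem_insert_of_mem _ this)
      · intro hh
        by_contra hno
        have hn : Fm.neg (Fm.box χ) ∈ Γ₀ := hΓ₀.neg_iff.2 hno
        have : Fm.box (Fm.neg (Fm.box χ)) ∈ Γ₀ :=
          hΓ₀.closed (Deriv.mp (Deriv.ax (Ax.box5 χ)) (Deriv.hyp hn))
        exact hΓ'.not_both hh (hsub (Set.mem_insert_of_mem _ this))
    have hmem : ψ ∈ (⟨Γ', hΓ', hagree⟩ : CW Γ₀).1 := hall _
    exact hΓ'.not_both hmem (hsub (Set.mem_insert _ _))

theorem sub_boximp (hΓ₀ : CC Γ₀) (Δ : CW Γ₀) {χ ψ : Fm}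
    (h : ∀ Δ' : CW Γ₀, χ ∈ Δ'.1 → ψ ∈ Δ'.1) :
    Fm.box (Fm.imp χ ψ) ∈ Δ.1 :=
  (box_mem_iff hΓ₀ Δ _).2 fun Δ' => Δ'.2.1.imp_iff.2 (h Δ')

theorem kmono (hΓ₀ : CC Γ₀) (Δ : CW Γ₀) {χ ψ : Fm}
    (h : ∀ Δ' : CW Γ₀, χ ∈ Δ'.1 → ψ ∈ Δ'.1) (hk : Fm.K χ ∈ Δ.1) :
    Fm.K ψ ∈ Δ.1 := by
  have hb : Fm.box (Fm.imp χ ψ) ∈ Δ.1 := sub_boximp hΓ₀ Δ h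
  have hki : Fm.K (Fm.imp χ ψ) ∈ Δ.1 :=
    Δ.2.1.closed (Deriv.mp (Deriv.ax (Ax.boxK _)) (Deriv.hyp hb))
  exact Δ.2.1.closed
    (Deriv.mp (Deriv.mp (Deriv.ax (Ax.kDist χ ψ)) (Deriv.hyp hki)) (Deriv.hyp hk))

theorem bmono (hΓ₀ : CC Γ₀) (Δ : CW Γ₀) {χ ψ : Fm}
    (h : ∀ Δ' : CW Γ₀, χ ∈ Δ'.1 → ψ ∈ Δ'.1) (hk : Fm.B χ ∈ Δ.1) :
    Fm.B ψ ∈ Δ.1 := by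
  have hb : Fm.box (Fm.imp χ ψ) ∈ Δ.1 := sub_boximp hΓ₀ Δ h
  have hki : Fm.K (Fm.imp χ ψ) ∈ Δ.1 :=
    Δ.2.1.closed (Deriv.mp (Deriv.ax (Ax.boxK _)) (Deriv.hyp hb))
  have hbi : Fm.B (Fm.imp χ ψ) ∈ Δ.1 :=
    Δ.2.1.closed (Deriv.mp (Deriv.ax (Ax.kB _)) (Deriv.hyp hki))
  exact Δ.2.1.closed
    (Deriv.mp (Deriv.mp (Deriv.ax (Ax.bDist χ ψ)) (Deriv.hyp hbi)) (Deriv.hyp hk))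

end Canon
section Canon2
open Fm

lemma taut_top : IsTaut fmTop := by
  intro v; simp only [fmTop, evalB_imp, evalB_var]; cases v (Fm.var 0) <;> rfl

lemma taut_andI (φ ψ : Fm) : IsTaut (imp φ (imp ψ (fmAnd φ ψ))) := by
  intro v; simp only [fmAnd, evalB_imp, evalB_neg]
  cases evalB v φ <;> cases evalB v ψ <;> rfl

variable {Γ₀ : Set Fm}

lemma pset_bot : pset Γ₀ fmBot = ∅ := by
  ext Δ
  simp only [pset, Set.mem_setOf_eq, Set.mem_empty_iff_false, iff_false]
  exact fun hh => Δ.2.1.1 (Deriv.hyp hh)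

lemma mem_pset_top (Δ : CW Γ₀) : Δ ∈ pset Γ₀ fmTop :=
  Δ.2.1.closed (dtaut taut_top)

lemma pset_neg (ψ : Fm) : pset Γ₀ (Fm.neg ψ) = (pset Γ₀ ψ)ᶜ := by
  ext Δ
  simp only [pset, Set.mem_setOf_eq, Set.mem_compl_iff]
  exact Δ.2.1.neg_iff

lemma pset_and (χ ψ : Fm) : pset Γ₀ (fmAnd χ ψ) = pset Γ₀ χ ∩ pset Γ₀ ψ := by
  ext Δ
  simp only [pset, fmAnd, Set.mem_setOf_eq, Set.mem_inter_iff]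
  rw [Δ.2.1.neg_iff, Δ.2.1.imp_iff, Δ.2.1.neg_iff]
  tauto

lemma pset_or (χ ψ : Fm) :
    pset Γ₀ (Fm.imp (Fm.neg χ) ψ) = pset Γ₀ χ ∪ pset Γ₀ ψ := by
  ext Δ
  simp only [pset, Set.mem_setOf_eq, Set.mem_union]
  rw [Δ.2.1.imp_iff, Δ.2.1.neg_iff]
  tauto

/-- Canonical K-neighbourhoods. -/
def EKc (Δ : CW Γ₀) : Set (Set (CW Γ₀)) :=
  {A | ∃ ψ : Fm, Fm.K ψ ∈ Δ.1 ∧ A = pset Γ₀ ψ}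

/-- Canonical B-neighbourhoods. -/
def EBc (Δ : CW Γ₀) : Set (Set (CW Γ₀)) :=
  {A | ∃ ψ : Fm, Fm.B ψ ∈ Δ.1 ∧ A = pset Γ₀ ψ}

lemma pset_eq_imp {χ ψ : Fm} (h : pset Γ₀ χ = pset Γ₀ ψ) :
    ∀ Δ' : CW Γ₀, χ ∈ Δ'.1 → ψ ∈ Δ'.1 := by
  intro Δ' hh
  have := Set.ext_iff.1 h Δ'
  exact this.1 hh

lemma kmem (hΓ₀ : CC Γ₀) (Δ : CW Γ₀) (χ : Fm) :
    pset Γ₀ χ ∈ EKc Δ ↔ Fm.K χ ∈ Δ.1 := by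
  constructor
  · rintro ⟨ψ, hK, heq⟩
    exact kmono hΓ₀ Δ (pset_eq_imp heq.symm) hK
  · intro hK; exact ⟨χ, hK, rfl⟩

lemma bmem (hΓ₀ : CC Γ₀) (Δ : CW Γ₀) (χ : Fm) :
    pset Γ₀ χ ∈ EBc Δ ↔ Fm.B χ ∈ Δ.1 := by
  constructor
  · rintro ⟨ψ, hB, heq⟩
    exact bmono hΓ₀ Δ (pset_eq_imp heq.symm) hB
  · intro hB; exact ⟨χ, hB, rfl⟩

lemma k_top (Δ : CW Γ₀) : Fm.K fmTop ∈ Δ.1 :=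
  Δ.2.1.closed (Deriv.mp (Deriv.ax (Ax.boxK _)) (Deriv.nec (Ax.taut taut_top)))

lemma b_top (Δ : CW Γ₀) : Fm.B fmTop ∈ Δ.1 :=
  Δ.2.1.closed (Deriv.mp (Deriv.ax (Ax.kB _)) (Deriv.hyp (k_top Δ)))

/-- The canonical frame based on a CC set `Γ₀`. -/
def canonFrame (hΓ₀ : CC Γ₀) : Frame where
  W := CW Γ₀
  wT := ⟨Γ₀, hΓ₀, fun _ => Iff.rfl⟩
  P := {A | ∃ ψ : Fm, A = pset Γ₀ ψ}
  EK := EKc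
  EB := EBc
  empty_mem := ⟨fmBot, pset_bot.symm⟩
  univ_mem := ⟨fmTop, by
    ext Δ; simp only [Set.mem_univ, true_iff]; exact mem_pset_top Δ⟩
  inter_mem := by
    rintro _ _ ⟨χ, rfl⟩ ⟨ψ, rfl⟩
    exact ⟨fmAnd χ ψ, (pset_and χ ψ).symm⟩
  union_mem := by
    rintro _ _ ⟨χ, rfl⟩ ⟨ψ, rfl⟩
    exact ⟨Fm.imp (Fm.neg χ) ψ, (pset_or χ ψ).symm⟩
  compl_mem := by
    rintro _ ⟨ψ, rfl⟩
    exact ⟨Fm.neg ψ, (pset_neg ψ).symm⟩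
  kprop_mem := by
    rintro _ ⟨ψ, rfl⟩
    refine ⟨Fm.K ψ, ?_⟩
    ext Δ
    simp only [Set.mem_setOf_eq, pset]
    exact (kmem hΓ₀ Δ ψ)
  bprop_mem := by
    rintro _ ⟨ψ, rfl⟩
    refine ⟨Fm.B ψ, ?_⟩
    ext Δ
    simp only [Set.mem_setOf_eq, pset]
    exact (bmem hΓ₀ Δ ψ)
  EK_sub := by rintro Δ _ ⟨ψ, _, rfl⟩; exact ⟨ψ, rfl⟩
  EB_sub := by rintro Δ _ ⟨ψ, _, rfl⟩; exact ⟨ψ, rfl⟩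
  EK_nonempty := fun Δ => ⟨pset Γ₀ fmTop, fmTop, k_top Δ, rfl⟩
  EK_inter := by
    rintro Δ _ _ ⟨χ, hχ, rfl⟩ ⟨ψ, hψ, rfl⟩
    refine ⟨fmAnd χ ψ, ?_, (pset_and χ ψ).symm⟩
    have h1 : Fm.K (imp χ (imp ψ (fmAnd χ ψ))) ∈ Δ.1 :=
      Δ.2.1.closed (Deriv.mp (Deriv.ax (Ax.boxK _)) (Deriv.nec (Ax.taut (taut_andI χ ψ))))
    have h2 : Fm.K (imp ψ (fmAnd χ ψ)) ∈ Δ.1 :=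
      Δ.2.1.closed (Deriv.mp (Deriv.mp (Deriv.ax (Ax.kDist _ _)) (Deriv.hyp h1)) (Deriv.hyp hχ))
    exact Δ.2.1.closed
      (Deriv.mp (Deriv.mp (Deriv.ax (Ax.kDist _ _)) (Deriv.hyp h2)) (Deriv.hyp hψ))
  EK_up := by
    rintro Δ _ B ⟨χ, hχ, rfl⟩ hsub ⟨ψ, rfl⟩
    refine ⟨ψ, ?_, rfl⟩
    exact kmono hΓ₀ Δ (fun Δ' hh => hsub hh) hχ
  EK_fact := by
    rintro Δ _ ⟨χ, hχ, rfl⟩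
    exact Δ.2.1.closed (Deriv.mp (Deriv.ax (Ax.kRefl χ)) (Deriv.hyp hχ))
  EB_nonempty := fun Δ => ⟨pset Γ₀ fmTop, fmTop, b_top Δ, rfl⟩
  EB_inter := by
    rintro Δ _ _ ⟨χ, hχ, rfl⟩ ⟨ψ, hψ, rfl⟩
    refine ⟨fmAnd χ ψ, ?_, (pset_and χ ψ).symm⟩
    have h0 : Fm.K (imp χ (imp ψ (fmAnd χ ψ))) ∈ Δ.1 :=
      Δ.2.1.closed (Deriv.mp (Deriv.ax (Ax.boxK _)) (Deriv.nec (Ax.taut (taut_andI χ ψ))))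
    have h1 : Fm.B (imp χ (imp ψ (fmAnd χ ψ))) ∈ Δ.1 :=
      Δ.2.1.closed (Deriv.mp (Deriv.ax (Ax.kB _)) (Deriv.hyp h0))
    have h2 : Fm.B (imp ψ (fmAnd χ ψ)) ∈ Δ.1 :=
      Δ.2.1.closed (Deriv.mp (Deriv.mp (Deriv.ax (Ax.bDist _ _)) (Deriv.hyp h1)) (Deriv.hyp hχ))
    exact Δ.2.1.closed
      (Deriv.mp (Deriv.mp (Deriv.ax (Ax.bDist _ _)) (Deriv.hyp h2)) (Deriv.hyp hψ))
  EB_up := by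
    rintro Δ _ B ⟨χ, hχ, rfl⟩ hsub ⟨ψ, rfl⟩
    exact ⟨ψ, bmono hΓ₀ Δ (fun Δ' hh => hsub hh) hχ, rfl⟩
  EB_proper := by
    rintro Δ ⟨χ, hχ, heq⟩
    have hmono : ∀ Δ' : CW Γ₀, χ ∈ Δ'.1 → fmBot ∈ Δ'.1 := by
      intro Δ' hh
      exact absurd (heq ▸ hh : Δ' ∈ (∅ : Set (CW Γ₀))) (Set.notMem_empty _)
    have hB : Fm.B fmBot ∈ Δ.1 := bmono hΓ₀ Δ hmono hχ
    exact Δ.2.1.not_both hB (Δ.2.1.closed (Deriv.ax Ax.consB))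
  EK_sub_EB := by
    rintro Δ _ ⟨χ, hχ, rfl⟩
    exact ⟨χ, Δ.2.1.closed (Deriv.mp (Deriv.ax (Ax.kB χ)) (Deriv.hyp hχ)), rfl⟩

/-- Truth lemma for the canonical model. -/
theorem truth_lemma (hΓ₀ : CC Γ₀) (φ : Fm) (Δ : CW Γ₀) :
    FSat (canonFrame hΓ₀) (fun n => pset Γ₀ (Fm.var n)) φ Δ ↔ φ ∈ Δ.1 := by
  induction φ generalizing Δ with
  | var n => exact Iff.rfl
  | neg ψ ih =>
    simp only [FSat]
    rw [ih Δ]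
    exact (Δ.2.1.neg_iff).symm
  | imp χ ψ ih1 ih2 =>
    simp only [FSat]
    rw [ih1 Δ, ih2 Δ]
    exact (Δ.2.1.imp_iff).symm
  | box ψ ih =>
    simp only [FSat]
    constructor
    · intro hall
      exact (box_mem_iff hΓ₀ Δ ψ).2 fun Δ' => (ih Δ').1 (hall Δ')
    · intro hb Δ'
      exact (ih Δ').2 ((box_mem_iff hΓ₀ Δ ψ).1 hb Δ')
  | K ψ ih =>
    simp only [FSat]
    have hset : {Δ' : CW Γ₀ | FSat (canonFrame hΓ₀) (fun n => pset Γ₀ (Fm.var n)) ψ Δ'}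
        = pset Γ₀ ψ := by
      ext Δ'; exact ih Δ'
    rw [show ({w' | FSat (canonFrame hΓ₀) (fun n => pset Γ₀ (Fm.var n)) ψ w'} :
      Set (canonFrame hΓ₀).W) = pset Γ₀ ψ from hset]
    exact kmem hΓ₀ Δ ψ
  | B ψ ih =>
    simp only [FSat]
    have hset : {Δ' : CW Γ₀ | FSat (canonFrame hΓ₀) (fun n => pset Γ₀ (Fm.var n)) ψ Δ'}
        = pset Γ₀ ψ := by
      ext Δ'; exact ih Δ'
    rw [show ({w' | FSat (canonFrame hΓ₀) (fun n => pset Γ₀ (Fm.var n)) ψ w'} :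
      Set (canonFrame hΓ₀).W) = pset Γ₀ ψ from hset]
    exact bmem hΓ₀ Δ ψ

end Canon2

/-- Completeness of S5BKE w.r.t. frame-based semantics. -/
theorem completeness_frame (Φ : Set Fm) (φ : Fm) (h : FEntails Φ φ) : Deriv Φ φ := by
  by_contra hnd
  have hcons : Consistent (insert (Fm.neg φ) Φ) := by
    intro hbot
    exact hnd (Deriv.mp (d_dne φ) (deduction hbot))
  obtain ⟨Γ₀, hsub, hΓ₀⟩ := lindenbaum hcons
  let 𝕂 : FModel :=
    ⟨canonFrame hΓ₀, fun n => pset Γ₀ (Fm.var n), fun n => ⟨Fm.var n, rfl⟩⟩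
  have hsat : ∀ ψ ∈ Φ, FMSat 𝕂 ψ := fun ψ hψ =>
    (truth_lemma hΓ₀ ψ _).2 (hsub (Set.mem_insert_of_mem _ hψ))
  have hφΓ : φ ∈ Γ₀ := (truth_lemma hΓ₀ φ _).1 (h 𝕂 hsat)
  exact hΓ₀.not_both hφΓ (hsub (Set.mem_insert _ _))
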